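/- Let D be an integral domain with quotient field K, ⋆ a semistar operation on D, T an overring of D, ⋆' a semistar operation on T, and ℓ = ℓ_{⋆,T}. Then: (1) T is always (⋆, ℓ)-linked to D (in particular, taking T = D, D is (⋆, ⋆̃)-linked to D); (2) if T is (⋆,⋆')-linked to D, then E^{ℓ} ⊆ E^{⋆̃'} ⊆ E^{⋆'_f} for every nonzero T-submodule E of K, and in particular T is (ℓ, ⋆')-linked to T. -/
import Mathlib


open Pointwise

/-! Basic framework for semistar operations on an integral domain `D`
with quotient field `K`. Submodules of `K` play the role of the
`D`-submodules of the quotient field. -/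

section Generic

variable (R : Type*) (K : Type*) [CommRing R] [Field K] [Algebra R K]

/-- A semistar operation on `R` (with ambient field `K`): a map on the nonzero
`R`-submodules of `K` satisfying (⋆₁), (⋆₂), (⋆₃). The map is total on
`Submodule R K`, but the axioms are only imposed on nonzero submodules. -/
structure SemistarOp where
  toFun : Submodule R K → Submodule R K
  smul' : ∀ x : K, x ≠ 0 → ∀ E : Submodule R K, E ≠ ⊥ → toFun (x • E) = x • toFun E
  mono' : ∀ E F : Submodule R K, E ≠ ⊥ → F ≠ ⊥ → E ≤ F → toFun E ≤ toFun F
  le_star' : ∀ E : Submodule R K, E ≠ ⊥ → E ≤ toFun E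
  idem' : ∀ E : Submodule R K, E ≠ ⊥ → toFun (toFun E) = toFun E

variable {R K}

/-- The `R`-submodule of `K` generated by (the image of) an ideal of `R`. -/
def idealSub (I : Ideal R) : Submodule R K := Submodule.map (Algebra.linearMap R K) I

/-- The finite-type operation `⋆_f` associated to (the function underlying) a semistar
operation: `E^{⋆_f} = ∪ { F^⋆ : F nonzero finitely generated, F ⊆ E }`. -/
def starF (f : Submodule R K → Submodule R K) (E : Submodule R K) : Submodule R K :=
  sSup {G | ∃ F : Submodule R K, F.FG ∧ F ≠ ⊥ ∧ F ≤ E ∧ G = f F}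

/-- `I` is a quasi-⋆-ideal: `I ≠ 0` and `I^⋆ ∩ R = I`. -/
def QuasiIdeal (f : Submodule R K → Submodule R K) (I : Ideal R) : Prop :=
  I ≠ ⊥ ∧ Submodule.comap (Algebra.linearMap R K) (f (idealSub I)) = I

/-- `I` is a quasi-⋆-prime: a prime quasi-⋆-ideal. -/
def QuasiPrime (f : Submodule R K → Submodule R K) (I : Ideal R) : Prop :=
  QuasiIdeal f I ∧ I.IsPrime

/-- `I` is a quasi-⋆-maximal: maximal among proper quasi-⋆-ideals. -/
def QuasiMax (f : Submodule R K → Submodule R K) (I : Ideal R) : Prop :=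
  QuasiIdeal f I ∧ I ≠ ⊤ ∧ ∀ J : Ideal R, QuasiIdeal f J → J ≠ ⊤ → I ≤ J → I = J

/-- The localization `E·R_Q` of a submodule `E` of `K` at (the complement of) `Q`:
for prime `Q` this is `{x ∈ K : s·x ∈ E for some s ∉ Q}`. -/
def locSub (Q : Ideal R) (E : Submodule R K) : Submodule R K :=
  Submodule.span R {x : K | ∃ s : R, s ∉ Q ∧ algebraMap R K s * x ∈ E}

/-- The spectral semistar operation `⋆̃` associated to `⋆`:
`E^{⋆̃} = ∩ { E R_Q : Q quasi-⋆_f-maximal }` (equal to `K` if there are none). -/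
def tildeOp (f : Submodule R K → Submodule R K) (E : Submodule R K) : Submodule R K :=
  ⨅ (Q : Ideal R) (_ : QuasiMax (starF f) Q), locSub Q E

/-- The `v`-operation `E ↦ (R :_K (R :_K E))`. -/
def vOp (E : Submodule R K) : Submodule R K := 1 / (1 / E)

/-- The `t`-operation: the finite-type operation associated to `v`. -/
def tOp : Submodule R K → Submodule R K := starF (vOp (R := R) (K := K))

/-- `R` is a Prüfer ⋆-multiplication domain: every nonzero finitely generated ideal `F`
is ⋆_f-invertible, i.e. `(F·(R :_K F))^{⋆_f} = R^⋆`. -/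
def PSMD (f : Submodule R K → Submodule R K) : Prop :=
  ∀ F : Ideal R, F ≠ ⊥ → F.FG →
    starF f (idealSub F * ((1 : Submodule R K) / idealSub F)) = f 1

/-- The content ideal of a polynomial: the ideal generated by its coefficients. -/
def contentI (h : Polynomial R) : Ideal R := Ideal.span (Set.range h.coeff)

/-- The Nagata ring `Na(R,⋆) = R[X]_{N(⋆)}`, realized as the subset
`{g/h : g, h ∈ R[X], h ≠ 0, c(h)^⋆ = R^⋆}` of the field `K(X)` of rational functions. -/
def NaSet (f : Submodule R K → Submodule R K) : Set (RatFunc K) :=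
  {x | ∃ g h : Polynomial R, h ≠ 0 ∧ f (idealSub (contentI h)) = f 1 ∧
    x * algebraMap (Polynomial K) (RatFunc K) (h.map (algebraMap R K)) =
      algebraMap (Polynomial K) (RatFunc K) (g.map (algebraMap R K))}

/-- The Nagata ring as a subring of `K(X)` (the set `NaSet` is multiplicatively
saturated, so it coincides with the subring it generates). -/
noncomputable def NaSub (f : Submodule R K → Submodule R K) : Subring (RatFunc K) :=
  Subring.closure (NaSet f)

/-- A subset `S` of `K` is integrally closed (in `K`) if every element of `K` which is a root
of a monic polynomial with coefficients in `S` lies in `S`. -/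
def IntClosedSet (S : Set K) : Prop :=
  ∀ x : K, (∃ p : Polynomial K, p.Monic ∧ (∀ n, p.coeff n ∈ S) ∧ p.eval x = 0) → x ∈ S

/-- A subset `S` of `K` is seminormal if `x² ∈ S` and `x³ ∈ S` imply `x ∈ S`. -/
def SeminormalSet (S : Set K) : Prop := ∀ x : K, x ^ 2 ∈ S → x ^ 3 ∈ S → x ∈ S

/-- `T` is `(f,g)`-linked to `T` (case `D = T` of linkedness). -/
def LinkedSelf (f g : Submodule R K → Submodule R K) : Prop :=
  ∀ G : Ideal R, G ≠ ⊥ → G.FG → f (idealSub G) = f 1 → g (idealSub G) = g 1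

end Generic

section Overring

variable {D : Type*} {K : Type*} [CommRing D] [Field K] [Algebra D K]

/-- The `T`-submodule `E·T` of `K` generated by a `D`-submodule `E` of `K`. -/
def extT (T : Subalgebra D K) (E : Submodule D K) : Submodule ↥T K :=
  Submodule.span ↥T (E : Set K)

/-- `T` is `(⋆,⋆')`-linked to `D`: for every nonzero finitely generated integral ideal `F`
of `D`, `F^⋆ = D^⋆` implies `(FT)^{⋆'} = T^{⋆'}`. -/
def LinkedF (f : Submodule D K → Submodule D K) (T : Subalgebra D K)
    (g : Submodule ↥T K → Submodule ↥T K) : Prop :=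
  ∀ F : Ideal D, F ≠ ⊥ → F.FG → f (idealSub F) = f 1 → g (extT T (idealSub F)) = g 1

/-- `T` is `t`-linked to `(D,⋆)`: `T` is `(⋆, t_T)`-linked to `D`. -/
def TLinked (f : Submodule D K → Submodule D K) (T : Subalgebra D K) : Prop :=
  LinkedF f T (tOp (R := ↥T) (K := K))

/-- The semistar operation `ℓ_{⋆,T}` on `T`:
`E^ℓ = ∩ { E T_{D∖P} : P quasi-⋆_f-prime of D }` (equal to `K` if there are none). -/
def ellOp (f : Submodule D K → Submodule D K) (T : Subalgebra D K)
    (E : Submodule ↥T K) : Submodule ↥T K :=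
  ⨅ (P : Ideal D) (_ : QuasiPrime (starF f) P),
    Submodule.span ↥T {x : K | ∃ r : D, r ∉ P ∧ algebraMap D K r * x ∈ E}

/-- The localization `D_P` of `D` at a prime `P`, as a subalgebra of `K`. -/
def Dloc (P : Ideal D) : Subalgebra D K :=
  Algebra.adjoin D {x : K | ∃ r : D, r ∉ P ∧ algebraMap D K r * x ∈ (⊥ : Subalgebra D K)}

/-- The localization `T_{D∖P}` of an overring `T` at the multiplicative set `D∖P`,
as a subalgebra of `K`. -/
def TlocD (T : Subalgebra D K) (P : Ideal D) : Subalgebra D K :=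
  Algebra.adjoin D {x : K | ∃ r : D, r ∉ P ∧ algebraMap D K r * x ∈ T}

/-- The localization `T_Q` of an overring `T` at a prime `Q` of `T`,
as a subalgebra of `K`. -/
def TlocQ (T : Subalgebra D K) (Q : Ideal ↥T) : Subalgebra D K :=
  Algebra.adjoin D {x : K | ∃ t : ↥T, t ∉ Q ∧ (t : K) * x ∈ T}

/-- `T` is `(⋆,⋆')`-flat over `D`: `T` is `(⋆,⋆')`-linked to `D` and `D_{Q∩D} = T_Q`
for every quasi-⋆'_f-prime `Q` of `T`. -/
def FlatF (f : Submodule D K → Submodule D K) (T : Subalgebra D K)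
    (g : Submodule ↥T K → Submodule ↥T K) : Prop :=
  LinkedF f T g ∧
    ∀ Q : Ideal ↥T, QuasiPrime (starF g) Q →
      Dloc (Q.comap (algebraMap D ↥T)) = TlocQ T Q

/-- `B` is a flat `A`-module (for subalgebras `A ⊆ B` of `K`, with the module structure
coming from the inclusion). -/
def FlatPair (A B : Subalgebra D K) : Prop :=
  ∃ h : A ≤ B, @Module.Flat ↥A ↥B _ _ ((Subalgebra.inclusion h).toRingHom.toModule)

/-- `B` is a flat `A`-module, for subrings `A ⊆ B` of a commutative ring. -/
def FlatSubring {L : Type*} [CommRing L] (A B : Subring L) : Prop :=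
  ∃ h : A ≤ B, @Module.Flat ↥A ↥B _ _ ((Subring.inclusion h).toModule)

end Overring

section AuxGeneric

variable {R K : Type*} [CommRing R] [Field K] [Algebra R K]

theorem aux_ne_bot_mono {A B : Submodule R K} (h : A ≤ B) (hA : A ≠ ⊥) : B ≠ ⊥ :=
  fun hB => hA (le_bot_iff.mp (hB ▸ h))

theorem aux_ne_bot_mono' {A B : Ideal R} (h : A ≤ B) (hA : A ≠ ⊥) : B ≠ ⊥ :=
  fun hB => hA (le_bot_iff.mp (hB ▸ h))

theorem aux_mem_idealSub {I : Ideal R} {x : K} :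
    x ∈ (idealSub I : Submodule R K) ↔ ∃ a ∈ I, algebraMap R K a = x := by
  simp [idealSub, Submodule.mem_map, Algebra.linearMap_apply]

theorem aux_idealSub_ne_bot (hinj : Function.Injective (algebraMap R K)) {I : Ideal R}
    (hI : I ≠ ⊥) : (idealSub I : Submodule R K) ≠ ⊥ := by
  obtain ⟨a, haI, ha⟩ := (Submodule.ne_bot_iff I).mp hI
  refine (Submodule.ne_bot_iff _).mpr ⟨algebraMap R K a, aux_mem_idealSub.mpr ⟨a, haI, rfl⟩, ?_⟩
  simpa using fun h => ha (hinj (h.trans (map_zero _).symm))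

theorem aux_ne_bot_of_idealSub {I : Ideal R} (hI : (idealSub I : Submodule R K) ≠ ⊥) : I ≠ ⊥ := by
  rintro rfl
  exact hI (by simp [idealSub])

theorem aux_idealSub_mono {I J : Ideal R} (h : I ≤ J) :
    (idealSub I : Submodule R K) ≤ idealSub J :=
  Submodule.map_mono h

theorem aux_idealSub_le_one {I : Ideal R} : (idealSub I : Submodule R K) ≤ 1 := by
  rintro x hx
  obtain ⟨a, _, rfl⟩ := aux_mem_idealSub.mp hx
  exact Submodule.mem_one.mpr ⟨a, rfl⟩

theorem aux_one_mem_one : (1 : K) ∈ (1 : Submodule R K) :=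
  Submodule.mem_one.mpr ⟨1, map_one _⟩

theorem aux_one_ne_bot : (1 : Submodule R K) ≠ ⊥ :=
  (Submodule.ne_bot_iff _).mpr ⟨1, aux_one_mem_one, one_ne_zero⟩

theorem aux_one_le_of_mem {E : Submodule R K} (h : (1 : K) ∈ E) : (1 : Submodule R K) ≤ E := by
  rintro x hx
  obtain ⟨r, rfl⟩ := Submodule.mem_one.mp hx
  simpa [Algebra.smul_def] using E.smul_mem r h

variable (s : SemistarOp R K)

theorem aux_star_ne_bot {E : Submodule R K} (hE : E ≠ ⊥) : s.toFun E ≠ ⊥ :=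
  aux_ne_bot_mono (s.le_star' E hE) hE

theorem aux_star_eq_one_of {E : Submodule R K} (hle : E ≤ 1) (hE : E ≠ ⊥)
    (h1 : (1 : K) ∈ s.toFun E) : s.toFun E = s.toFun 1 := by
  refine le_antisymm (s.mono' E 1 hE aux_one_ne_bot hle) ?_
  have h2 : (1 : Submodule R K) ≤ s.toFun E := aux_one_le_of_mem h1
  have h3 := s.mono' 1 (s.toFun E) aux_one_ne_bot (aux_star_ne_bot s hE) h2
  rwa [s.idem' E hE] at h3

theorem aux_starF_le_of {E F : Submodule R K} (hFfg : F.FG) (hFb : F ≠ ⊥) (hFle : F ≤ E) :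
    s.toFun F ≤ starF s.toFun E :=
  le_sSup ⟨F, hFfg, hFb, hFle, rfl⟩

theorem aux_starF_mono (f : Submodule R K → Submodule R K) {E E' : Submodule R K} (h : E ≤ E') :
    starF f E ≤ starF f E' := by
  refine sSup_le_sSup ?_
  rintro G ⟨F, h1, h2, h3, rfl⟩
  exact ⟨F, h1, h2, h3.trans h, rfl⟩

theorem aux_mem_starF_iff {E : Submodule R K} (hE : E ≠ ⊥) {x : K} :
    x ∈ starF s.toFun E ↔ ∃ F : Submodule R K, F.FG ∧ F ≠ ⊥ ∧ F ≤ E ∧ x ∈ s.toFun F := by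
  obtain ⟨e, heE, hene⟩ := (Submodule.ne_bot_iff E).mp hE
  have hne : {G | ∃ F : Submodule R K, F.FG ∧ F ≠ ⊥ ∧ F ≤ E ∧ G = s.toFun F}.Nonempty := by
    refine ⟨s.toFun (Submodule.span R {e}), Submodule.span R {e},
      Submodule.fg_span (Set.finite_singleton e), ?_, ?_, rfl⟩
    · simpa [Submodule.span_singleton_eq_bot] using hene
    · exact Submodule.span_le.mpr (Set.singleton_subset_iff.mpr heE)
  have hdir : DirectedOn (· ≤ ·) {G | ∃ F : Submodule R K, F.FG ∧ F ≠ ⊥ ∧ F ≤ E ∧ G = s.toFun F} := by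
    rintro G1 ⟨F1, hf1, hb1, hle1, rfl⟩ G2 ⟨F2, hf2, hb2, hle2, rfl⟩
    have hb : F1 ⊔ F2 ≠ ⊥ := aux_ne_bot_mono le_sup_left hb1
    exact ⟨s.toFun (F1 ⊔ F2), ⟨F1 ⊔ F2, hf1.sup hf2, hb, sup_le hle1 hle2, rfl⟩,
      s.mono' _ _ hb1 hb le_sup_left, s.mono' _ _ hb2 hb le_sup_right⟩
  rw [starF, Submodule.mem_sSup_of_directed hne hdir]
  constructor
  · rintro ⟨G, ⟨F, h1, h2, h3, rfl⟩, hxG⟩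
    exact ⟨F, h1, h2, h3, hxG⟩
  · rintro ⟨F, h1, h2, h3, h4⟩
    exact ⟨s.toFun F, ⟨F, h1, h2, h3, rfl⟩, h4⟩

theorem aux_le_starF {E : Submodule R K} (hE : E ≠ ⊥) : E ≤ starF s.toFun E := by
  obtain ⟨e, heE, hene⟩ := (Submodule.ne_bot_iff E).mp hE
  intro x hxE
  have hfin : ({e, x} : Set K).Finite := (Set.finite_singleton x).insert e
  have hb : Submodule.span R {e, x} ≠ ⊥ :=
    (Submodule.ne_bot_iff _).mpr ⟨e, Submodule.subset_span (Set.mem_insert e {x}), hene⟩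
  have hle : Submodule.span R {e, x} ≤ E :=
    Submodule.span_le.mpr (Set.insert_subset_iff.mpr ⟨heE, Set.singleton_subset_iff.mpr hxE⟩)
  have hx : x ∈ Submodule.span R ({e, x} : Set K) :=
    Submodule.subset_span (by simp)
  exact aux_starF_le_of s (Submodule.fg_span hfin) hb hle (s.le_star' _ hb hx)

theorem aux_starF_ne_bot {E : Submodule R K} (hE : E ≠ ⊥) : starF s.toFun E ≠ ⊥ :=
  aux_ne_bot_mono (aux_le_starF s hE) hE

theorem aux_starF_le_star {E : Submodule R K} (hE : E ≠ ⊥) : starF s.toFun E ≤ s.toFun E := by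
  refine sSup_le ?_
  rintro G ⟨F, _, h2, h3, rfl⟩
  exact s.mono' F E h2 hE h3

theorem aux_starF_idem {E : Submodule R K} (hE : E ≠ ⊥) :
    starF s.toFun (starF s.toFun E) = starF s.toFun E := by
  classical
  refine le_antisymm ?_ (aux_le_starF s (aux_starF_ne_bot s hE))
  intro z hz
  rw [aux_mem_starF_iff s (aux_starF_ne_bot s hE)] at hz
  obtain ⟨F, hFfg, hFb, hFle, hzF⟩ := hz
  obtain ⟨ss, hss⟩ := hFfg
  obtain ⟨e, heE, hene⟩ := (Submodule.ne_bot_iff E).mp hE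
  have claim : ∀ t : Finset K, (∀ w ∈ t, w ∈ starF s.toFun E) →
      ∃ G : Submodule R K, G.FG ∧ G ≠ ⊥ ∧ G ≤ E ∧ ∀ w ∈ t, w ∈ s.toFun G := by
    intro t
    induction t using Finset.induction_on with
    | empty =>
      intro _
      refine ⟨Submodule.span R {e}, Submodule.fg_span (Set.finite_singleton e), ?_, ?_, by simp⟩
      · simpa [Submodule.span_singleton_eq_bot] using hene
      · exact Submodule.span_le.mpr (Set.singleton_subset_iff.mpr heE)
    | @insert w t hw ih =>
      intro h
      obtain ⟨G1, h1fg, h1b, h1le, h1all⟩ := ih fun z hz => h z (Finset.mem_insert_of_mem hz)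
      obtain ⟨G2, h2fg, h2b, h2le, hwG2⟩ :=
        (aux_mem_starF_iff s hE).mp (h w (Finset.mem_insert_self w t))
      refine ⟨G1 ⊔ G2, h1fg.sup h2fg, aux_ne_bot_mono le_sup_left h1b, sup_le h1le h2le, ?_⟩
      intro z hz
      rcases Finset.mem_insert.mp hz with rfl | hz
      · exact s.mono' _ _ h2b (aux_ne_bot_mono le_sup_right h2b) le_sup_right hwG2
      · exact s.mono' _ _ h1b (aux_ne_bot_mono le_sup_left h1b) le_sup_left (h1all z hz)
  obtain ⟨G, hGfg, hGb, hGle, hall⟩ :=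
    claim ss (fun w hw => hFle (hss ▸ Submodule.subset_span hw))
  have hFG : F ≤ s.toFun G := hss ▸ Submodule.span_le.mpr (fun w hw => hall w hw)
  have h5 := s.mono' F (s.toFun G) hFb (aux_star_ne_bot s hGb) hFG
  rw [s.idem' G hGb] at h5
  exact aux_starF_le_of s hGfg hGb hGle (h5 hzF)

theorem aux_quasi_closure (hinj : Function.Injective (algebraMap R K)) {I : Ideal R}
    (hI : I ≠ ⊥) :
    QuasiIdeal (starF s.toFun)
        (Submodule.comap (Algebra.linearMap R K) (starF s.toFun (idealSub I))) ∧
      I ≤ Submodule.comap (Algebra.linearMap R K) (starF s.toFun (idealSub I)) := by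
  set C : Ideal R := Submodule.comap (Algebra.linearMap R K) (starF s.toFun (idealSub I)) with hC
  have hIb : (idealSub I : Submodule R K) ≠ ⊥ := aux_idealSub_ne_bot hinj hI
  have hIC : I ≤ C := by
    intro a haI
    exact Submodule.mem_comap.mpr (aux_le_starF s hIb (aux_mem_idealSub.mpr ⟨a, haI, rfl⟩))
  have heq : starF s.toFun (idealSub C) = starF s.toFun (idealSub I) := by
    refine le_antisymm ?_ (aux_starF_mono _ (aux_idealSub_mono hIC))
    have h1 : (idealSub C : Submodule R K) ≤ starF s.toFun (idealSub I) := by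
      rintro x hx
      obtain ⟨c, hc, rfl⟩ := aux_mem_idealSub.mp hx
      exact hc
    exact (aux_starF_mono _ h1).trans (le_of_eq (aux_starF_idem s hIb))
  refine ⟨⟨aux_ne_bot_mono' hIC hI, ?_⟩, hIC⟩
  rw [heq]

theorem aux_quasi_not_le (hinj : Function.Injective (algebraMap R K)) {Q : Ideal R}
    (hQ : QuasiIdeal (starF s.toFun) Q) (hQt : Q ≠ ⊤) {J : Ideal R} (hJ : J ≠ ⊥) (hJfg : J.FG)
    (hJs : s.toFun (idealSub J) = s.toFun 1) : ¬J ≤ Q := by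
  intro hle
  have h1 : (1 : K) ∈ s.toFun (idealSub J : Submodule R K) := by
    rw [hJs]
    exact s.le_star' 1 aux_one_ne_bot aux_one_mem_one
  have h2 : (1 : K) ∈ starF s.toFun (idealSub Q) :=
    aux_starF_le_of s (Submodule.FG.map (Algebra.linearMap R K) hJfg) (aux_idealSub_ne_bot hinj hJ) (aux_idealSub_mono hle) h1
  have h3 : (1 : R) ∈ Q := by
    rw [← hQ.2]
    exact Submodule.mem_comap.mpr (by simpa using h2)
  exact hQt ((Ideal.eq_top_iff_one Q).mpr h3)

theorem aux_star_mul_le {E F : Submodule R K} (hE : E ≠ ⊥) (hF : F ≠ ⊥) :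
    E * s.toFun F ≤ s.toFun (E * F) := by
  obtain ⟨f0, hf0F, hf0⟩ := (Submodule.ne_bot_iff F).mp hF
  have hEF : E * F ≠ ⊥ := by
    obtain ⟨e0, he0E, he0⟩ := (Submodule.ne_bot_iff E).mp hE
    exact (Submodule.ne_bot_iff _).mpr
      ⟨e0 * f0, Submodule.mul_mem_mul he0E hf0F, mul_ne_zero he0 hf0⟩
  refine Submodule.mul_le.mpr ?_
  intro m hm n hn
  rcases eq_or_ne m 0 with rfl | hm0
  · simpa using (s.toFun (E * F)).zero_mem
  have hsmul : m • F ≠ ⊥ := by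
    refine (Submodule.ne_bot_iff _).mpr ⟨m * f0, ?_, mul_ne_zero hm0 hf0⟩
    simpa [smul_eq_mul (α := K)] using Submodule.smul_mem_pointwise_smul f0 m F hf0F
  have hle : m • F ≤ E * F := by
    intro y hy
    rw [← SetLike.mem_coe, Submodule.coe_pointwise_smul] at hy
    obtain ⟨y', hy', rfl⟩ := hy
    simpa [smul_eq_mul (α := K)] using Submodule.mul_mem_mul hm hy'
  have hmem : m * n ∈ s.toFun (m • F) := by
    rw [s.smul' m hm0 F hF]
    simpa [smul_eq_mul (α := K)] using Submodule.smul_mem_pointwise_smul n m (s.toFun F) hn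
  exact s.mono' _ _ hsmul hEF hle hmem

theorem aux_quasiMax_isPrime (hinj : Function.Injective (algebraMap R K)) {Q : Ideal R}
    (hQ : QuasiMax (starF s.toFun) Q) : Q.IsPrime := by
  refine ⟨hQ.2.1, ?_⟩
  intro a b hab
  by_contra hcon
  push_neg at hcon
  obtain ⟨ha, hb⟩ := hcon
  have key : ∀ c : R, c ∉ Q → ∃ F : Submodule R K,
      F.FG ∧ F ≠ ⊥ ∧ F ≤ idealSub (Q ⊔ Ideal.span {c}) ∧ (1 : K) ∈ s.toFun F := by
    intro c hc
    have hAb : Q ⊔ Ideal.span {c} ≠ ⊥ := aux_ne_bot_mono' le_sup_left hQ.1.1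
    have h1A : (1 : R) ∈ Submodule.comap (Algebra.linearMap R K)
        (starF s.toFun (idealSub (Q ⊔ Ideal.span {c}))) := by
      by_contra h1n
      obtain ⟨hCq, hAC⟩ := aux_quasi_closure s hinj hAb
      have hCt : Submodule.comap (Algebra.linearMap R K)
          (starF s.toFun (idealSub (Q ⊔ Ideal.span {c}))) ≠ ⊤ :=
        fun h => h1n (h ▸ Submodule.mem_top)
      have hQC := hQ.2.2 _ hCq hCt (le_trans le_sup_left hAC)
      exact hc (hQC ▸ hAC (Ideal.mem_sup_right (Ideal.mem_span_singleton_self c)))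
    have h1A' : (1 : K) ∈ starF s.toFun (idealSub (Q ⊔ Ideal.span {c})) := by
      simpa using (Submodule.mem_comap.mp h1A)
    rw [aux_mem_starF_iff s (aux_idealSub_ne_bot hinj hAb)] at h1A'
    obtain ⟨F, h1, h2, h3, h4⟩ := h1A'
    exact ⟨F, h1, h2, h3, h4⟩
  obtain ⟨Fa, hFafg, hFab, hFale, h1a⟩ := key a ha
  obtain ⟨Fb, hFbfg, hFbb, hFble, h1b⟩ := key b hb
  have hmul : Fa * Fb ≤ (idealSub Q : Submodule R K) := by
    refine Submodule.mul_le.mpr ?_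
    intro x hx y hy
    obtain ⟨a', ha', rfl⟩ := aux_mem_idealSub.mp (hFale hx)
    obtain ⟨b', hb', rfl⟩ := aux_mem_idealSub.mp (hFble hy)
    have hab' : a' * b' ∈ Q := by
      obtain ⟨q, hq, r, hr, rfl⟩ := Submodule.mem_sup.mp ha'
      obtain ⟨q', hq', r', hr', rfl⟩ := Submodule.mem_sup.mp hb'
      obtain ⟨u, rfl⟩ := Ideal.mem_span_singleton'.mp hr
      obtain ⟨v, rfl⟩ := Ideal.mem_span_singleton'.mp hr'
      have hexp : (q + u * a) * (q' + v * b) =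
          q * (q' + v * b) + (u * v) * (a * b) + (u * a) * q' := by ring
      rw [hexp]
      exact add_mem (add_mem (Q.mul_mem_right _ hq) (Q.mul_mem_left _ hab)) (Q.mul_mem_left _ hq')
    rw [← map_mul]
    exact aux_mem_idealSub.mpr ⟨a' * b', hab', rfl⟩
  have hFabb : Fa * Fb ≠ ⊥ := by
    obtain ⟨e1, he1, he1n⟩ := (Submodule.ne_bot_iff Fa).mp hFab
    obtain ⟨e2, he2, he2n⟩ := (Submodule.ne_bot_iff Fb).mp hFbb
    exact (Submodule.ne_bot_iff _).mpr
      ⟨e1 * e2, Submodule.mul_mem_mul he1 he2, mul_ne_zero he1n he2n⟩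
  have hFble2 : Fb ≤ s.toFun Fa * Fb := by
    intro m hm
    simpa using Submodule.mul_mem_mul h1a hm
  have h2 : s.toFun Fa * Fb ≤ s.toFun (Fa * Fb) := by
    rw [mul_comm (s.toFun Fa) Fb, mul_comm Fa Fb]
    exact aux_star_mul_le s hFbb hFab
  have h3 : (1 : K) ∈ s.toFun (Fa * Fb) := by
    have hne : s.toFun Fa * Fb ≠ ⊥ := aux_ne_bot_mono hFble2 hFbb
    have h5 := s.mono' _ _ hFbb hne hFble2
    have h6 := s.mono' _ _ hne (aux_star_ne_bot s hFabb) h2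
    rw [s.idem' _ hFabb] at h6
    exact h6 (h5 h1b)
  have h7 : (1 : K) ∈ starF s.toFun (idealSub Q) :=
    aux_starF_le_of s (hFafg.mul hFbfg) hFabb hmul h3
  have h8 : (1 : R) ∈ Q := by
    rw [← hQ.1.2]
    exact Submodule.mem_comap.mpr (by simpa using h7)
  exact hQ.2.1 ((Ideal.eq_top_iff_one Q).mpr h8)

theorem aux_exists_quasiMax (hinj : Function.Injective (algebraMap R K)) {C : Ideal R}
    (hCq : QuasiIdeal (starF s.toFun) C) (hCt : C ≠ ⊤) :
    ∃ M, QuasiMax (starF s.toFun) M ∧ C ≤ M := by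
  classical
  have hchainub : ∀ c ⊆ {J : Ideal R | QuasiIdeal (starF s.toFun) J ∧ J ≠ ⊤},
      IsChain (· ≤ ·) c → ∀ y ∈ c,
        ∃ ub ∈ {J : Ideal R | QuasiIdeal (starF s.toFun) J ∧ J ≠ ⊤}, ∀ z ∈ c, z ≤ ub := by
    intro c hcS hchain y hy
    have hne : c.Nonempty := ⟨y, hy⟩
    have hdir : DirectedOn (· ≤ ·) c := hchain.directedOn
    have hyb : y ≠ ⊥ := (hcS hy).1.1
    have hsb : sSup c ≠ ⊥ := aux_ne_bot_mono' (le_sSup hy) hyb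
    refine ⟨sSup c, ⟨⟨hsb, ?_⟩, ?_⟩, fun z hz => le_sSup hz⟩
    · refine le_antisymm ?_ ?_
      · intro r hr
        have hr' : algebraMap R K r ∈ starF s.toFun (idealSub (sSup c)) := by
          simpa using Submodule.mem_comap.mp hr
        rw [aux_mem_starF_iff s (aux_idealSub_ne_bot hinj hsb)] at hr'
        obtain ⟨F, hFfg, hFb, hFle, hrF⟩ := hr'
        obtain ⟨ss, hss⟩ := hFfg
        have claim : ∀ t : Finset K, (∀ z ∈ t, z ∈ (idealSub (sSup c) : Submodule R K)) →
            ∃ J ∈ c, ∀ z ∈ t, z ∈ (idealSub J : Submodule R K) := by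
          intro t
          induction t using Finset.induction_on with
          | empty => exact fun _ => ⟨y, hy, by simp⟩
          | @insert w t hw ih =>
            intro h
            obtain ⟨J1, hJ1, hJ1all⟩ := ih fun z hz => h z (Finset.mem_insert_of_mem hz)
            obtain ⟨v, hv, rfl⟩ := aux_mem_idealSub.mp (h w (Finset.mem_insert_self w t))
            obtain ⟨J2, hJ2, hvJ2⟩ :=
              (Submodule.mem_sSup_of_directed hne hdir).mp hv
            obtain ⟨J3, hJ3, h13, h23⟩ := hdir J1 hJ1 J2 hJ2
            refine ⟨J3, hJ3, ?_⟩
            intro z hz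
            rcases Finset.mem_insert.mp hz with rfl | hz
            · exact aux_mem_idealSub.mpr ⟨v, h23 hvJ2, rfl⟩
            · exact aux_idealSub_mono h13 (hJ1all z hz)
        obtain ⟨J, hJc, hJall⟩ :=
          claim ss (fun z hz => hFle (hss ▸ Submodule.subset_span hz))
        have hFJ : F ≤ idealSub J := hss ▸ Submodule.span_le.mpr (fun z hz => hJall z hz)
        have h1 : algebraMap R K r ∈ starF s.toFun (idealSub J) :=
          aux_starF_le_of s ⟨ss, hss⟩ hFb hFJ hrF
        have h2 : r ∈ J := by
          rw [← (hcS hJc).1.2]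
          exact Submodule.mem_comap.mpr (by simpa using h1)
        exact le_sSup hJc h2
      · intro r hr
        exact Submodule.mem_comap.mpr
          (aux_le_starF s (aux_idealSub_ne_bot hinj hsb) (aux_mem_idealSub.mpr ⟨r, hr, rfl⟩))
    · intro h
      have h1 : (1 : R) ∈ sSup c := h ▸ Submodule.mem_top
      obtain ⟨J, hJ, h1J⟩ := (Submodule.mem_sSup_of_directed hne hdir).mp h1
      exact (hcS hJ).2 ((Ideal.eq_top_iff_one J).mpr h1J)
  obtain ⟨M, hCM, hMmax⟩ := zorn_le_nonempty₀ _ hchainub C ⟨hCq, hCt⟩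
  exact ⟨M, ⟨hMmax.1.1, hMmax.1.2,
    fun J hJq hJt hle => le_antisymm hle (hMmax.2 ⟨hJq, hJt⟩ hle)⟩, hCM⟩

theorem aux_colon_quasi (hinj : Function.Injective (algebraMap R K)) {E : Submodule R K}
    (hE : E ≠ ⊥) {x : K} (hx : x ≠ 0)
    (hJb : Submodule.comap (Algebra.linearMap R K)
        (Submodule.comap (LinearMap.mulLeft R x) (starF s.toFun E)) ≠ ⊥) :
    QuasiIdeal (starF s.toFun)
      (Submodule.comap (Algebra.linearMap R K)
        (Submodule.comap (LinearMap.mulLeft R x) (starF s.toFun E))) := by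
  set J : Ideal R := Submodule.comap (Algebra.linearMap R K)
    (Submodule.comap (LinearMap.mulLeft R x) (starF s.toFun E)) with hJ
  refine ⟨hJb, le_antisymm ?_ ?_⟩
  · intro r hr
    have hr' : algebraMap R K r ∈ starF s.toFun (idealSub J) := by
      simpa using Submodule.mem_comap.mp hr
    rw [aux_mem_starF_iff s (aux_idealSub_ne_bot hinj hJb)] at hr'
    obtain ⟨F, hFfg, hFb, hFle, hrF⟩ := hr'
    have hxF : x • F ≤ starF s.toFun E := by
      intro m hm
      rw [← SetLike.mem_coe, Submodule.coe_pointwise_smul] at hm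
      obtain ⟨m', hm', rfl⟩ := hm
      obtain ⟨u, hu, rfl⟩ := aux_mem_idealSub.mp (hFle hm')
      have := Submodule.mem_comap.mp (Submodule.mem_comap.mp hu)
      simpa [smul_eq_mul (α := K)] using this
    have hxFfg : (x • F).FG := by
      obtain ⟨ss, hss⟩ := hFfg
      rw [← hss, Submodule.smul_span]
      exact Submodule.fg_span (ss.finite_toSet.smul_set)
    have hxFb : x • F ≠ ⊥ := by
      obtain ⟨m0, hm0, hm0n⟩ := (Submodule.ne_bot_iff F).mp hFb
      refine (Submodule.ne_bot_iff _).mpr ⟨x * m0, ?_, mul_ne_zero hx hm0n⟩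
      simpa [smul_eq_mul (α := K)] using Submodule.smul_mem_pointwise_smul m0 x F hm0
    have key : s.toFun (x • F) ≤ starF s.toFun E := by
      have := aux_starF_le_of s hxFfg hxFb hxF
      rwa [aux_starF_idem s hE] at this
    have hmem : x * algebraMap R K r ∈ s.toFun (x • F) := by
      rw [s.smul' x hx F hFb]
      simpa [smul_eq_mul (α := K)] using
        Submodule.smul_mem_pointwise_smul (algebraMap R K r) x (s.toFun F) hrF
    exact Submodule.mem_comap.mpr (Submodule.mem_comap.mpr (by simpa using key hmem))
  · intro r hr
    exact Submodule.mem_comap.mpr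
      (aux_le_starF s (aux_idealSub_ne_bot hinj hJb) (aux_mem_idealSub.mpr ⟨r, hr, rfl⟩))

theorem aux_mem_locSub_of_prime {Q : Ideal R} (hQ : Q.IsPrime) {E : Submodule R K} {x : K}
    (hx : x ∈ locSub Q E) : ∃ u : R, u ∉ Q ∧ algebraMap R K u * x ∈ E := by
  have hone : (1 : R) ∉ Q := fun h => hQ.ne_top ((Ideal.eq_top_iff_one Q).mpr h)
  refine Submodule.span_induction ?_ ?_ ?_ ?_ hx
  · rintro y ⟨u, hu, hmem⟩
    exact ⟨u, hu, hmem⟩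
  · exact ⟨1, hone, by simp⟩
  · rintro y z _ _ ⟨u, hu, hmu⟩ ⟨v, hv, hmv⟩
    refine ⟨u * v, fun h => ((hQ.mem_or_mem h).elim hu hv), ?_⟩
    have h1 : algebraMap R K (u * v) * (y + z) =
        v • (algebraMap R K u * y) + u • (algebraMap R K v * z) := by
      simp [Algebra.smul_def]
      ring
    rw [h1]
    exact E.add_mem (E.smul_mem v hmu) (E.smul_mem u hmv)
  · rintro r y _ ⟨u, hu, hmu⟩
    refine ⟨u, hu, ?_⟩
    have h1 : algebraMap R K u * (r • y) = r • (algebraMap R K u * y) := by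
      simp [Algebra.smul_def]
      ring
    rw [h1]
    exact E.smul_mem r hmu

end AuxGeneric
section AuxOverring

variable {D K : Type*} [CommRing D] [Field K] [Algebra D K]

theorem aux_spanT_span (T : Subalgebra D K) (S : Set K) :
    Submodule.span ↥T ((Submodule.span D S : Submodule D K) : Set K) = Submodule.span ↥T S := by
  refine le_antisymm ?_ (Submodule.span_mono Submodule.subset_span)
  refine Submodule.span_le.mpr ?_
  intro x hx
  exact Submodule.span_le_restrictScalars D ↥T S hx

theorem aux_extT_fg (T : Subalgebra D K) {F : Ideal D} (hF : F.FG) :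
    (extT T (idealSub F)).FG := by
  obtain ⟨ss, hss⟩ := hF
  have h1 : (idealSub F : Submodule D K) =
      Submodule.span D (⇑(Algebra.linearMap D K) '' ↑ss) := by
    rw [idealSub, ← hss]
    exact Submodule.map_span _ _
  rw [extT, h1, aux_spanT_span]
  exact Submodule.fg_span ((ss.finite_toSet).image _)

theorem aux_extT_ne_bot (T : Subalgebra D K) {E : Submodule D K} (hE : E ≠ ⊥) :
    extT T E ≠ ⊥ := by
  obtain ⟨e, heE, hene⟩ := (Submodule.ne_bot_iff E).mp hE
  exact (Submodule.ne_bot_iff _).mpr ⟨e, Submodule.subset_span heE, hene⟩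

theorem aux_extT_le_one (T : Subalgebra D K) (F : Ideal D) :
    extT T (idealSub F) ≤ (1 : Submodule ↥T K) := by
  rw [extT]
  refine Submodule.span_le.mpr ?_
  intro x hx
  obtain ⟨d, _, rfl⟩ := aux_mem_idealSub.mp hx
  exact Submodule.mem_one.mpr ⟨⟨algebraMap D K d, T.algebraMap_mem d⟩, rfl⟩

theorem aux_comap_ne_bot [IsDomain D] [IsFractionRing D K] (T : Subalgebra D K) {Q : Ideal ↥T}
    (hQ : Q ≠ ⊥) : Q.comap (algebraMap D ↥T) ≠ ⊥ := by
  obtain ⟨t, htQ, htne⟩ := (Submodule.ne_bot_iff Q).mp hQ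
  obtain ⟨⟨a, b⟩, hab⟩ := IsLocalization.surj (nonZeroDivisors D) ((t : ↥T) : K)
  have hbne : (b : D) ≠ 0 := nonZeroDivisors.ne_zero b.2
  have htK : ((t : ↥T) : K) ≠ 0 := fun h => htne (Subtype.val_injective h)
  have hane : a ≠ 0 := by
    intro h
    rw [h, map_zero] at hab
    exact (mul_ne_zero htK (fun hb => hbne (IsFractionRing.injective D K
      (hb.trans (map_zero _).symm)))) hab
  have hts : algebraMap D ↥T a = algebraMap D ↥T (b : D) * t := by
    apply Subtype.val_injective
    push_cast
    rw [← hab]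
    ring
  refine (Submodule.ne_bot_iff _).mpr ⟨a, Ideal.mem_comap.mpr ?_, hane⟩
  rw [hts]
  exact Ideal.mul_mem_left Q _ htQ

end AuxOverring
set_option maxHeartbeats 1000000 in
/-- **Proposition 3.10 (2) and (3).** `T` is always `(⋆, ℓ_{⋆,T})`-linked to `D` (in
particular `D` is `(⋆,⋆̃)`-linked to `D`); and if `T` is `(⋆,⋆')`-linked to `D`, then
`ℓ_{⋆,T} ≤ ⋆̃' ≤ ⋆'_f`, and in particular `T` is `(ℓ_{⋆,T},⋆')`-linked to `T`. -/
theorem ellOp_linked_and_le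
    {D K : Type*} [CommRing D] [IsDomain D] [Field K] [Algebra D K] [IsFractionRing D K]
    (s : SemistarOp D K) (T : Subalgebra D K) (s' : SemistarOp ↥T K) :
    (LinkedF s.toFun T (ellOp s.toFun T) ∧
      LinkedSelf s.toFun (tildeOp s.toFun)) ∧
    (LinkedF s.toFun T s'.toFun →
      (∀ E : Submodule ↥T K, E ≠ ⊥ →
          ellOp s.toFun T E ≤ tildeOp s'.toFun E ∧ tildeOp s'.toFun E ≤ starF s'.toFun E) ∧
        LinkedSelf (ellOp s.toFun T) s'.toFun) := by
  have hinjD : Function.Injective (algebraMap D K) := IsFractionRing.injective D K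
  have hinjT : Function.Injective (algebraMap ↥T K) := Subtype.val_injective
  have htow : ∀ d : D, algebraMap ↥T K (algebraMap D ↥T d) = algebraMap D K d :=
    fun d => (IsScalarTower.algebraMap_apply D ↥T K d).symm
  constructor
  · constructor
    · -- (1) T is (⋆, ℓ)-linked to D
      intro F hF hFfg hFs
      refine le_antisymm ?_ ?_
      · -- ellOp is monotone and extT T (idealSub F) ≤ 1
        refine le_iInf fun P => le_iInf fun hP =>
          (iInf_le_of_le P (iInf_le _ hP)).trans (Submodule.span_mono ?_)
        rintro x ⟨r, hr, hm⟩
        exact ⟨r, hr, aux_extT_le_one T F hm⟩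
      · refine le_iInf fun P => le_iInf fun hP =>
          (iInf_le_of_le P (iInf_le _ hP)).trans (Submodule.span_le.mpr ?_)
        obtain ⟨g, hgF, hgP⟩ := SetLike.not_le_iff_exists.mp
          (aux_quasi_not_le s hinjD hP.1 hP.2.ne_top hF hFfg hFs)
        rintro x ⟨r, hr, hm⟩
        obtain ⟨t, ht⟩ := Submodule.mem_one.mp hm
        refine Submodule.subset_span
          ⟨r * g, fun h => (hP.2.mem_or_mem h).elim hr hgP, ?_⟩
        have hcalc : algebraMap D K (r * g) * x = t • (algebraMap D K g) := by
          show _ = algebraMap ↥T K t * algebraMap D K g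
          rw [map_mul, ht]
          ring
        rw [hcalc, extT]
        exact Submodule.smul_mem _ t
          (Submodule.subset_span (aux_mem_idealSub.mpr ⟨g, hgF, rfl⟩))
    · -- (1') D is (⋆, ⋆̃)-linked to D
      intro G hG hGfg hGs
      refine le_antisymm ?_ ?_
      · refine le_iInf fun Q => le_iInf fun hQ =>
          (iInf_le_of_le Q (iInf_le _ hQ)).trans (Submodule.span_mono ?_)
        rintro x ⟨r, hr, hm⟩
        exact ⟨r, hr, aux_idealSub_le_one hm⟩
      · refine le_iInf fun Q => le_iInf fun hQ =>
          (iInf_le_of_le Q (iInf_le _ hQ)).trans (Submodule.span_le.mpr ?_)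
        have hQp : Q.IsPrime := aux_quasiMax_isPrime s hinjD hQ
        obtain ⟨g, hgG, hgQ⟩ := SetLike.not_le_iff_exists.mp
          (aux_quasi_not_le s hinjD hQ.1 hQ.2.1 hG hGfg hGs)
        rintro x ⟨u, hu, hm⟩
        obtain ⟨d, hd⟩ := Submodule.mem_one.mp hm
        refine Submodule.subset_span
          ⟨u * g, fun h => (hQp.mem_or_mem h).elim hu hgQ, ?_⟩
        have hcalc : algebraMap D K (u * g) * x = algebraMap D K (g * d) := by
          rw [map_mul, map_mul, hd]
          ring
        rw [hcalc]
        exact aux_mem_idealSub.mpr ⟨g * d, G.mul_mem_right d hgG, rfl⟩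
  · -- (2)
    intro hL
    have core : ∀ Q : Ideal ↥T, QuasiMax (starF s'.toFun) Q →
        ∃ P : Ideal D, QuasiPrime (starF s.toFun) P ∧
          ∀ r : D, r ∉ P → algebraMap D ↥T r ∉ Q := by
      intro Q hQ
      set P0 : Ideal D := Q.comap (algebraMap D ↥T) with hP0def
      have hP0b : P0 ≠ ⊥ := aux_comap_ne_bot T hQ.1.1
      obtain ⟨hCq, hP0C⟩ := aux_quasi_closure s hinjD hP0b
      have hCt : Submodule.comap (Algebra.linearMap D K)
          (starF s.toFun (idealSub P0)) ≠ ⊤ := by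
        intro htop
        have h1C : (1 : D) ∈ Submodule.comap (Algebra.linearMap D K)
            (starF s.toFun (idealSub P0)) := htop ▸ Submodule.mem_top
        have h1' : (1 : K) ∈ starF s.toFun (idealSub P0) := by
          simpa using Submodule.mem_comap.mp h1C
        rw [aux_mem_starF_iff s (aux_idealSub_ne_bot hinjD hP0b)] at h1'
        obtain ⟨F, hFfg, hFb, hFle, h1F⟩ := h1'
        set J : Ideal D := Submodule.comap (Algebra.linearMap D K) F with hJdef
        have hJeq : (idealSub J : Submodule D K) = F := by
          have hFr : F ≤ LinearMap.range (Algebra.linearMap D K) := by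
            refine le_trans hFle (le_trans aux_idealSub_le_one ?_)
            rw [Submodule.one_eq_range]
          rw [idealSub, Submodule.map_comap_eq]
          exact inf_eq_right.mpr hFr
        have hJfg : J.FG := by
          refine Submodule.fg_of_fg_map_injective (Algebra.linearMap D K) hinjD ?_
          show (idealSub J : Submodule D K).FG
          rw [hJeq]; exact hFfg
        have hJb : J ≠ ⊥ := by
          intro h
          refine hFb ?_
          rw [← hJeq, h]
          simp [idealSub]
        have hJle : J ≤ P0 := by
          intro d hd
          obtain ⟨p, hp, heq⟩ := aux_mem_idealSub.mp
            (hFle (Submodule.mem_comap.mp hd))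
          exact (hinjD heq) ▸ hp
        have hJs : s.toFun (idealSub J) = s.toFun 1 := by
          rw [hJeq]
          exact aux_star_eq_one_of s (hFle.trans aux_idealSub_le_one) hFb h1F
        have hLJ := hL J hJb hJfg hJs
        have hGle : extT T (idealSub J) ≤ (idealSub Q : Submodule ↥T K) := by
          rw [extT]
          refine Submodule.span_le.mpr ?_
          intro x hx
          obtain ⟨d, hd, rfl⟩ := aux_mem_idealSub.mp hx
          exact aux_mem_idealSub.mpr ⟨algebraMap D ↥T d, hJle hd, htow d⟩
        have hGb : extT T (idealSub J) ≠ ⊥ :=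
          aux_extT_ne_bot T (aux_idealSub_ne_bot hinjD hJb)
        have h1s : (1 : K) ∈ s'.toFun (extT T (idealSub J)) := by
          rw [hLJ]
          exact s'.le_star' 1 aux_one_ne_bot aux_one_mem_one
        have h2 : (1 : K) ∈ starF s'.toFun (idealSub Q) :=
          aux_starF_le_of s' (aux_extT_fg T hJfg) hGb hGle h1s
        have h3 : (1 : ↥T) ∈ Q := by
          rw [← hQ.1.2]
          exact Submodule.mem_comap.mpr (by simpa using h2)
        exact hQ.2.1 ((Ideal.eq_top_iff_one Q).mpr h3)
      obtain ⟨M, hM, hCM⟩ := aux_exists_quasiMax s hinjD hCq hCt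
      refine ⟨M, ⟨hM.1, aux_quasiMax_isPrime s hinjD hM⟩, ?_⟩
      intro r hr hmem
      exact hr (hCM (hP0C (Ideal.mem_comap.mpr hmem)))
    have hC1a : ∀ E : Submodule ↥T K, ellOp s.toFun T E ≤ tildeOp s'.toFun E := by
      intro E
      refine le_iInf fun Q => le_iInf fun hQ => ?_
      obtain ⟨P, hP, hPQ⟩ := core Q hQ
      refine (iInf_le_of_le P (iInf_le _ hP)).trans (Submodule.span_le.mpr ?_)
      rintro x ⟨r, hr, hm⟩
      refine Submodule.subset_span ⟨algebraMap D ↥T r, hPQ r hr, ?_⟩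
      rw [htow r]
      exact hm
    have hC1b : ∀ E : Submodule ↥T K, E ≠ ⊥ → tildeOp s'.toFun E ≤ starF s'.toFun E := by
      intro E hE x hx
      by_contra hxn
      have hx0 : x ≠ 0 := fun h => hxn (h ▸ (starF s'.toFun E).zero_mem)
      set J : Ideal ↥T := Submodule.comap (Algebra.linearMap ↥T K)
        (Submodule.comap (LinearMap.mulLeft ↥T x) (starF s'.toFun E)) with hJdef
      obtain ⟨e, heE, hene⟩ := (Submodule.ne_bot_iff E).mp hE
      obtain ⟨a, b, hb, hab⟩ := IsFractionRing.div_surjective (A := D) (e / x)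
      have hbne : algebraMap D K b ≠ 0 := fun h =>
        nonZeroDivisors.ne_zero hb (hinjD (h.trans (map_zero _).symm))
      have key : algebraMap D K a * x = algebraMap D K b * e := by
        have := (div_eq_div_iff hbne hx0).mp hab
        rw [this]; ring
      have haK : algebraMap D K a ≠ 0 := by
        intro h
        rw [h, zero_mul] at key
        exact (mul_ne_zero hbne hene) key.symm
      have htJ : algebraMap D ↥T a ∈ J := by
        refine Submodule.mem_comap.mpr (Submodule.mem_comap.mpr ?_)
        have hm : LinearMap.mulLeft ↥T x (algebraMap ↥T K (algebraMap D ↥T a)) ∈ E := by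
          show x * algebraMap ↥T K (algebraMap D ↥T a) ∈ E
          rw [htow a, mul_comm, key]
          have : algebraMap D K b * e = (algebraMap D ↥T b) • e := by
            show _ = algebraMap ↥T K (algebraMap D ↥T b) * e
            rw [htow b]
          rw [this]
          exact E.smul_mem _ heE
        exact aux_le_starF s' hE hm
      have htne : algebraMap D ↥T a ≠ 0 := by
        intro h
        refine haK ?_
        rw [← htow a, h, map_zero]
      have hJb : J ≠ ⊥ := (Submodule.ne_bot_iff J).mpr ⟨algebraMap D ↥T a, htJ, htne⟩
      have hJq : QuasiIdeal (starF s'.toFun) J :=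
        aux_colon_quasi s' hinjT hE hx0 hJb
      have hJt : J ≠ ⊤ := by
        intro h
        have h1 : (1 : ↥T) ∈ J := h ▸ Submodule.mem_top
        have h2 := Submodule.mem_comap.mp (Submodule.mem_comap.mp h1)
        refine hxn ?_
        simpa using h2
      obtain ⟨Q, hQ, hJQ⟩ := aux_exists_quasiMax s' hinjT hJq hJt
      have hle2 : tildeOp s'.toFun E ≤ locSub Q E := iInf_le_of_le Q (iInf_le _ hQ)
      have hxQ : x ∈ locSub Q E := hle2 hx
      obtain ⟨u, hu, hm⟩ := aux_mem_locSub_of_prime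
        (aux_quasiMax_isPrime s' hinjT hQ) hxQ
      have huJ : u ∈ J := by
        refine Submodule.mem_comap.mpr (Submodule.mem_comap.mpr ?_)
        show x * algebraMap ↥T K u ∈ starF s'.toFun E
        rw [mul_comm]
        exact aux_le_starF s' hE hm
      exact hu (hJQ huJ)
    refine ⟨fun E hE => ⟨hC1a E, hC1b E hE⟩, ?_⟩
    -- T is (ℓ, ⋆')-linked to T
    intro G hG hGfg hGe
    have hGsub : (idealSub G : Submodule ↥T K) ≠ ⊥ := aux_idealSub_ne_bot hinjT hG
    have h1 : (1 : K) ∈ ellOp s.toFun T 1 := by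
      refine (Submodule.mem_iInf _).mpr fun P => (Submodule.mem_iInf _).mpr fun hP => ?_
      refine Submodule.subset_span ⟨1, fun h => hP.2.ne_top ((Ideal.eq_top_iff_one P).mpr h), ?_⟩
      rw [map_one, one_mul]
      exact aux_one_mem_one
    rw [← hGe] at h1
    have h2 : (1 : K) ∈ s'.toFun (idealSub G) :=
      aux_starF_le_star s' hGsub (hC1b (idealSub G) hGsub (hC1a (idealSub G) h1))
    exact aux_star_eq_one_of s' aux_idealSub_le_one hGsub h2
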